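/- Let f ∈ ℂ[[x,y]] be a nonzero formal power series. Then there exists a finite set V of nonzero vectors in ℤ≥0², depending only on f, such that for every nonempty finite subset A ⊆ ℝ≥0² and every rational number ξ > 0 the following are equivalent: (a) A + ℝ≥0² is contained in the interior of ξ·𝒩(f); (b) for every v ∈ V one has min_{a∈A} ⟨v,a⟩ > ξ·Φ_{𝒩(f)}(v). In other words, checking the strict support-function inequalities at the finitely many primitive integral normal vectors of the Newton fan of f suffices to verify the inclusion of Newton polygons. -/

import Mathlib

/-!
By Dickson's lemma the support of `f` has finitely many minimal exponents `G`, and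
`𝒩(f) = conv G + ℝ≥0²`, so `Φ(v) = min_{p ∈ G} ⟨v, p⟩` on `ℝ≥0²`. The minimising `p` can only
change across a normal of a segment `[p, q]` with `p, q ∈ G`, so `Φ` is linear on each cone
between consecutive such normals and the coordinate axes. Hence `ξ Φ ≤ ⟨·, x⟩` on these finitely
many rays implies it on all of `ℝ≥0²`, which puts `x` in `ξ 𝒩(f)` by separating with half-planes
whose normals lie in `ℝ≥0²`. As strict inequality on the rays is an open condition on `x`, it
characterises the interior of `ξ 𝒩(f)`.
-/

open scoped Pointwise

noncomputable section

/-- The standard inner (dot) product on ℝ². -/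
def dot2 (v u : ℝ × ℝ) : ℝ := v.1 * u.1 + v.2 * u.2

/-- The nonnegative quadrant ℝ≥0² in ℝ². -/
def quadrant2 : Set (ℝ × ℝ) := {u | 0 ≤ u.1 ∧ 0 ≤ u.2}

/-- The support of a power series f ∈ ℂ[[x,y]], viewed as a subset of ℝ². -/
def psupp (f : MvPowerSeries (Fin 2) ℂ) : Set (ℝ × ℝ) :=
  {p | ∃ d : Fin 2 →₀ ℕ, MvPowerSeries.coeff d f ≠ 0 ∧ p = ((d 0 : ℝ), (d 1 : ℝ))}

/-- The Newton polygon 𝒩(f) = conv(supp f) + ℝ≥0². -/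
def newtonPoly (f : MvPowerSeries (Fin 2) ℂ) : Set (ℝ × ℝ) :=
  convexHull ℝ (psupp f) + quadrant2

/-- The support function Φ_{𝒩(f)}(v) = inf{⟨v,u⟩ : u ∈ 𝒩(f)}. -/
def suppFn (f : MvPowerSeries (Fin 2) ℂ) (v : ℝ × ℝ) : ℝ :=
  sInf (dot2 v '' newtonPoly f)

/-- The monomial order ord_v(f) = min{⟨v,d⟩ : d ∈ supp f}. -/
def ordV (v : ℝ × ℝ) (f : MvPowerSeries (Fin 2) ℂ) : ℝ :=
  sInf (dot2 v '' psupp f)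


open Set Filter Topology

section Dot

lemma dot2_add_left (v w u : ℝ × ℝ) : dot2 (v + w) u = dot2 v u + dot2 w u := by
  simp only [dot2, Prod.fst_add, Prod.snd_add]; ring

lemma dot2_smul_left (c : ℝ) (v u : ℝ × ℝ) : dot2 (c • v) u = c * dot2 v u := by
  simp only [dot2, Prod.smul_fst, Prod.smul_snd, smul_eq_mul]; ring

lemma dot2_add_right (v u w : ℝ × ℝ) : dot2 v (u + w) = dot2 v u + dot2 v w := by
  simp only [dot2, Prod.fst_add, Prod.snd_add]; ring

lemma dot2_sub_right (v u w : ℝ × ℝ) : dot2 v (u - w) = dot2 v u - dot2 v w := by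
  simp only [dot2, Prod.fst_sub, Prod.snd_sub]; ring

lemma dot2_smul_right (v : ℝ × ℝ) (c : ℝ) (u : ℝ × ℝ) : dot2 v (c • u) = c * dot2 v u := by
  simp only [dot2, Prod.smul_fst, Prod.smul_snd, smul_eq_mul]; ring

lemma isLinearMap_dot2 (v : ℝ × ℝ) : IsLinearMap ℝ (dot2 v) :=
  ⟨dot2_add_right v, fun c u => dot2_smul_right v c u⟩

lemma continuous_dot2 (v : ℝ × ℝ) : Continuous (dot2 v) := by
  unfold dot2; fun_prop

lemma dot2_self_pos {v : ℝ × ℝ} (hv : v ≠ 0) : 0 < dot2 v v := by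
  obtain ⟨v1, v2⟩ := v
  have : v1 ≠ 0 ∨ v2 ≠ 0 := by
    by_contra! h
    exact hv (Prod.ext h.1 h.2)
  unfold dot2
  rcases this with h | h
  · nlinarith [mul_self_pos.2 h, mul_self_nonneg v2]
  · nlinarith [mul_self_pos.2 h, mul_self_nonneg v1]

end Dot

section Quadrant

lemma quadrant2_eq_Ici : quadrant2 = Ici 0 := by
  ext u; simp [quadrant2, Prod.le_def]

lemma dot2_nonneg {v u : ℝ × ℝ} (hv : v ∈ quadrant2) (hu : u ∈ quadrant2) : 0 ≤ dot2 v u :=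
  add_nonneg (mul_nonneg hv.1 hu.1) (mul_nonneg hv.2 hu.2)

lemma add_pos_of_mem_quadrant2 {v : ℝ × ℝ} (hv : v ∈ quadrant2) (hv0 : v ≠ 0) :
    0 < v.1 + v.2 := by
  obtain ⟨h1, h2⟩ := hv
  by_contra! h
  exact hv0 (Prod.ext_iff.2 ⟨by simp only [Prod.fst_zero]; linarith,
    by simp only [Prod.snd_zero]; linarith⟩)

lemma quadrant2_add_quadrant2 : quadrant2 + quadrant2 ⊆ quadrant2 := by
  rw [quadrant2_eq_Ici]
  rintro _ ⟨p, hp, q, hq, rfl⟩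
  exact add_nonneg (α := ℝ × ℝ) hp hq

end Quadrant

/-- A monotone coordinate on the rays of the quadrant, from `0` at `(1, 0)` to `1` at `(0, 1)`. -/
def raySlope (v : ℝ × ℝ) : ℝ := v.2 / (v.1 + v.2)

section RaySlope

variable {v w : ℝ × ℝ}

lemma raySlope_le_iff (hv : 0 < v.1 + v.2) (hw : 0 < w.1 + w.2) :
    raySlope v ≤ raySlope w ↔ v.2 * w.1 ≤ v.1 * w.2 := by
  unfold raySlope
  rw [div_le_div_iff₀ hv hw]
  constructor <;> intro h <;> linarith

lemma raySlope_lt_iff (hv : 0 < v.1 + v.2) (hw : 0 < w.1 + w.2) :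
    raySlope v < raySlope w ↔ v.2 * w.1 < v.1 * w.2 := by
  unfold raySlope
  rw [div_lt_div_iff₀ hv hw]
  constructor <;> intro h <;> linarith

lemma exists_eq_smul_add_smul_of_raySlope_le {r₁ r₂ : ℝ × ℝ} (h₁ : 0 < r₁.1 + r₁.2)
    (h₂ : 0 < r₂.1 + r₂.2) (hv : 0 < v.1 + v.2) (hv₁ : raySlope r₁ ≤ raySlope v)
    (hv₂ : raySlope v ≤ raySlope r₂) :
    ∃ s t : ℝ, 0 ≤ s ∧ 0 ≤ t ∧ v = s • r₁ + t • r₂ := by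
  have hκ := (raySlope_le_iff h₁ h₂).1 (hv₁.trans hv₂)
  rw [raySlope_le_iff h₁ hv] at hv₁
  rw [raySlope_le_iff hv h₂] at hv₂
  rcases (sub_nonneg.2 hκ).lt_or_eq with hκ | hκ
  · -- Cramer's rule
    refine ⟨(v.1 * r₂.2 - v.2 * r₂.1) / (r₁.1 * r₂.2 - r₁.2 * r₂.1),
      (r₁.1 * v.2 - r₁.2 * v.1) / (r₁.1 * r₂.2 - r₁.2 * r₂.1),
      div_nonneg (by linarith) hκ.le, div_nonneg (by linarith) hκ.le, ?_⟩
    ext <;> simp only [Prod.fst_add, Prod.snd_add, Prod.smul_fst, Prod.smul_snd, smul_eq_mul] <;>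
      rw [div_mul_eq_mul_div, div_mul_eq_mul_div, ← add_div, eq_div_iff hκ.ne'] <;> ring
  · -- all three rays coincide
    have hcramer : (r₁.1 * v.2 - r₁.2 * v.1) * (r₂.1 + r₂.2)
        + (v.1 * r₂.2 - v.2 * r₂.1) * (r₁.1 + r₁.2)
        = (r₁.1 * r₂.2 - r₁.2 * r₂.1) * (v.1 + v.2) := by ring
    rw [← hκ, zero_mul] at hcramer
    have hpar : r₁.1 * v.2 = r₁.2 * v.1 := by
      nlinarith [mul_nonneg (sub_nonneg.2 hv₁) h₂.le, mul_nonneg (sub_nonneg.2 hv₂) h₁.le]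
    refine ⟨(v.1 + v.2) / (r₁.1 + r₁.2), 0, div_nonneg hv.le h₁.le, le_rfl, ?_⟩
    ext <;> simp only [Prod.fst_add, Prod.snd_add, Prod.smul_fst, Prod.smul_snd, smul_eq_mul,
      zero_mul, add_zero] <;> field_simp <;> linarith

end RaySlope

/-- For `d ≠ 0`, `(|d₂|, |d₁|)` spans the only ray of the quadrant that can be orthogonal
to `d`. -/
def quadrantNormal (d : ℝ × ℝ) : ℝ × ℝ := (|d.2|, |d.1|)

lemma quadrantNormal_mem_quadrant2 (d : ℝ × ℝ) : quadrantNormal d ∈ quadrant2 :=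
  ⟨abs_nonneg _, abs_nonneg _⟩

lemma quadrantNormal_add_pos {d : ℝ × ℝ} (hd : d ≠ 0) :
    0 < (quadrantNormal d).1 + (quadrantNormal d).2 := by
  apply add_pos_of_mem_quadrant2 (quadrantNormal_mem_quadrant2 d)
  intro h
  simp only [quadrantNormal, Prod.mk_eq_zero, abs_eq_zero] at h
  exact hd (Prod.ext h.2 h.1)

lemma raySlope_eq_raySlope_quadrantNormal {w d : ℝ × ℝ} (hw : w ∈ quadrant2)
    (hw₀ : 0 < w.1 + w.2) (hd : d ≠ 0) (hwd : dot2 w d = 0) :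
    raySlope w = raySlope (quadrantNormal d) := by
  have key : w.1 * |d.1| = w.2 * |d.2| := by
    have h : w.1 * d.1 = -(w.2 * d.2) := by unfold dot2 at hwd; linarith
    simpa [abs_mul, abs_of_nonneg hw.1, abs_of_nonneg hw.2] using congrArg abs h
  unfold raySlope
  rw [div_eq_div_iff hw₀.ne' (quadrantNormal_add_pos hd).ne']
  simp only [quadrantNormal]
  linarith

/-- The ray orthogonal to `d` is spanned by `⟨r₂, d⟩ r₁ - ⟨r₁, d⟩ r₂`, a positive combination
of `r₁` and `r₂`. -/
lemma raySlope_quadrantNormal_mem_Ioo {r₁ r₂ d : ℝ × ℝ} (hr₁ : r₁ ∈ quadrant2)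
    (hr₂ : r₂ ∈ quadrant2) (h₁ : 0 < r₁.1 + r₁.2) (h₂ : 0 < r₂.1 + r₂.2)
    (h₁₂ : raySlope r₁ ≤ raySlope r₂) (hd₁ : dot2 r₁ d < 0) (hd₂ : 0 < dot2 r₂ d) :
    raySlope (quadrantNormal d) ∈ Ioo (raySlope r₁) (raySlope r₂) := by
  set α := dot2 r₁ d with hα
  set β := dot2 r₂ d with hβ
  set w := β • r₁ - α • r₂ with hw
  have hw₁ : w.1 = β * r₁.1 - α * r₂.1 := rfl
  have hw₂ : w.2 = β * r₁.2 - α * r₂.2 := rfl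
  have hwq : w ∈ quadrant2 := by
    constructor
    · rw [hw₁]; nlinarith [mul_nonneg hd₂.le hr₁.1, mul_nonneg (neg_nonneg.2 hd₁.le) hr₂.1]
    · rw [hw₂]; nlinarith [mul_nonneg hd₂.le hr₁.2, mul_nonneg (neg_nonneg.2 hd₁.le) hr₂.2]
  have hw₀ : 0 < w.1 + w.2 := by
    rw [hw₁, hw₂]; nlinarith [mul_pos hd₂ h₁, mul_pos (neg_pos.2 hd₁) h₂]
  have hd : d ≠ 0 := by
    rintro rfl
    simp [hα, dot2] at hd₁
  have hwd : dot2 w d = 0 := by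
    rw [hw, sub_eq_add_neg, dot2_add_left, ← neg_smul, dot2_smul_left, dot2_smul_left]
    ring
  rw [← raySlope_eq_raySlope_quadrantNormal hwq hw₀ hd hwd]
  rw [raySlope_le_iff h₁ h₂] at h₁₂
  have hκ : 0 < r₁.1 * r₂.2 - r₁.2 * r₂.1 := by
    refine (sub_nonneg.2 h₁₂).lt_of_ne fun hκ => ?_
    have h : α * (r₂.1 + r₂.2) - β * (r₁.1 + r₁.2)
        = (r₁.1 * r₂.2 - r₁.2 * r₂.1) * (d.1 - d.2) := by
      simp only [hα, hβ, dot2]; ring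
    rw [← hκ, zero_mul] at h
    nlinarith [mul_pos hd₂ h₁, mul_pos (neg_pos.2 hd₁) h₂]
  constructor
  · rw [raySlope_lt_iff h₁ hw₀, hw₁, hw₂]
    nlinarith [mul_pos (neg_pos.2 hd₁) hκ]
  · rw [raySlope_lt_iff hw₀ h₂, hw₁, hw₂]
    nlinarith [mul_pos hd₂ hκ]

/-- The lexicographic minimiser of `(⟨r₁, ·⟩, ⟨r₂, ·⟩)` works: a point beating it for `r₂`
would span an edge whose normal lies strictly between `r₁` and `r₂`. -/
lemma exists_isMinOn_isMinOn {G : Finset (ℝ × ℝ)} (hG : G.Nonempty) {r₁ r₂ : ℝ × ℝ}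
    (hr₁ : r₁ ∈ quadrant2) (hr₂ : r₂ ∈ quadrant2) (h₁ : 0 < r₁.1 + r₁.2) (h₂ : 0 < r₂.1 + r₂.2)
    (h₁₂ : raySlope r₁ ≤ raySlope r₂)
    (hgap : ∀ x ∈ G, ∀ y ∈ G, x ≠ y →
      raySlope (quadrantNormal (x - y)) ∉ Ioo (raySlope r₁) (raySlope r₂)) :
    ∃ a ∈ G, IsMinOn (dot2 r₁) G a ∧ IsMinOn (dot2 r₂) G a := by
  classical
  obtain ⟨a₀, ha₀, hmin₀⟩ := G.exists_min_image (dot2 r₁) hG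
  obtain ⟨a, ha, hmin⟩ := (G.filter fun b => dot2 r₁ b = dot2 r₁ a₀).exists_min_image (dot2 r₂)
    ⟨a₀, Finset.mem_filter.2 ⟨ha₀, rfl⟩⟩
  rw [Finset.mem_filter] at ha
  refine ⟨a, ha.1, isMinOn_iff.2 fun b hb => ha.2 ▸ hmin₀ b hb, isMinOn_iff.2 fun b hb => ?_⟩
  by_contra! hb₂
  have hb₁ : dot2 r₁ a < dot2 r₁ b := by
    refine (ha.2 ▸ hmin₀ b hb).lt_of_ne fun hab => ?_
    exact (hmin b (Finset.mem_filter.2 ⟨hb, hab.symm.trans ha.2⟩)).not_gt hb₂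
  refine hgap a ha.1 b hb (by rintro rfl; exact lt_irrefl _ hb₂)
    (raySlope_quadrantNormal_mem_Ioo hr₁ hr₂ h₁ h₂ h₁₂ ?_ ?_)
  · rw [dot2_sub_right]; linarith
  · rw [dot2_sub_right]; linarith

def newtonPolygon (G : Finset (ℝ × ℝ)) : Set (ℝ × ℝ) := convexHull ℝ ↑G + quadrant2

/-- These rays subdivide the normal fan of `newtonPolygon G`. -/
def fanRays (G : Finset (ℝ × ℝ)) : Finset (ℝ × ℝ) :=
  insert (1, 0) (insert (0, 1) (G.offDiag.image fun q => quadrantNormal (q.1 - q.2)))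

section NewtonPolygon

variable {G : Finset (ℝ × ℝ)}

lemma subset_newtonPolygon : (↑G : Set (ℝ × ℝ)) ⊆ newtonPolygon G :=
  fun a ha => ⟨a, subset_convexHull ℝ _ ha, 0, ⟨le_rfl, le_rfl⟩, add_zero a⟩

lemma add_mem_newtonPolygon {z q : ℝ × ℝ} (hz : z ∈ newtonPolygon G) (hq : q ∈ quadrant2) :
    z + q ∈ newtonPolygon G := by
  have h := add_mem_add hz hq
  rw [newtonPolygon, add_assoc] at h
  exact add_subset_add_left quadrant2_add_quadrant2 h

lemma convex_newtonPolygon (G : Finset (ℝ × ℝ)) : Convex ℝ (newtonPolygon G) :=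
  (convex_convexHull ℝ _).add (quadrant2_eq_Ici ▸ convex_Ici 0)

lemma isClosed_newtonPolygon (G : Finset (ℝ × ℝ)) : IsClosed (newtonPolygon G) :=
  (quadrant2_eq_Ici ▸ isClosed_Ici).add_left_of_isCompact
    (G.finite_toSet.isCompact_convexHull (𝕜 := ℝ))

lemma isLeast_dot2_newtonPolygon {v a : ℝ × ℝ} (hv : v ∈ quadrant2) (ha : a ∈ G)
    (hmin : IsMinOn (dot2 v) G a) : IsLeast (dot2 v '' newtonPolygon G) (dot2 v a) := by
  refine ⟨⟨a, subset_newtonPolygon ha, rfl⟩, ?_⟩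
  rintro _ ⟨_, ⟨z, hz, q, hq, rfl⟩, rfl⟩
  have hz : dot2 v a ≤ dot2 v z :=
    convexHull_min (t := {z | dot2 v a ≤ dot2 v z}) (isMinOn_iff.1 hmin)
      (convex_halfSpace_ge (isLinearMap_dot2 v) _) hz
  rw [dot2_add_right]
  linarith [dot2_nonneg hv hq]

lemma exists_isMinOn_dot2 (hG : G.Nonempty) (v : ℝ × ℝ) : ∃ a ∈ G, IsMinOn (dot2 v) G a := by
  simpa only [isMinOn_iff, Finset.mem_coe] using G.exists_min_image (dot2 v) hG

lemma sInf_dot2_le (hG : G.Nonempty) {v z : ℝ × ℝ} (hv : v ∈ quadrant2)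
    (hz : z ∈ newtonPolygon G) : sInf (dot2 v '' newtonPolygon G) ≤ dot2 v z := by
  obtain ⟨a, ha, hmin⟩ := exists_isMinOn_dot2 hG v
  exact csInf_le (isLeast_dot2_newtonPolygon hv ha hmin).bddBelow ⟨z, hz, rfl⟩

end NewtonPolygon

section FanRays

variable {G : Finset (ℝ × ℝ)}

lemma mem_quadrant2_of_mem_fanRays {r : ℝ × ℝ} (hr : r ∈ fanRays G) : r ∈ quadrant2 := by
  simp only [fanRays, Finset.mem_insert, Finset.mem_image] at hr
  rcases hr with rfl | rfl | ⟨q, -, rfl⟩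
  · exact ⟨zero_le_one, le_rfl⟩
  · exact ⟨le_rfl, zero_le_one⟩
  · exact quadrantNormal_mem_quadrant2 _

lemma add_pos_of_mem_fanRays {r : ℝ × ℝ} (hr : r ∈ fanRays G) : 0 < r.1 + r.2 := by
  simp only [fanRays, Finset.mem_insert, Finset.mem_image, Finset.mem_offDiag] at hr
  rcases hr with rfl | rfl | ⟨q, ⟨-, -, hq⟩, rfl⟩
  · norm_num
  · norm_num
  · exact quadrantNormal_add_pos (sub_ne_zero.2 hq)

lemma ne_zero_of_mem_fanRays {r : ℝ × ℝ} (hr : r ∈ fanRays G) : r ≠ 0 := by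
  rintro rfl
  simpa using add_pos_of_mem_fanRays hr

lemma quadrantNormal_mem_fanRays {x y : ℝ × ℝ} (hx : x ∈ G) (hy : y ∈ G) (hxy : x ≠ y) :
    quadrantNormal (x - y) ∈ fanRays G :=
  Finset.mem_insert_of_mem <| Finset.mem_insert_of_mem <|
    Finset.mem_image.2 ⟨(x, y), Finset.mem_offDiag.2 ⟨hx, hy, hxy⟩, rfl⟩

lemma exists_natCast_of_mem_fanRays (hG : ∀ p ∈ G, ∃ m n : ℕ, p = ((m : ℝ), (n : ℝ)))
    {r : ℝ × ℝ} (hr : r ∈ fanRays G) : ∃ m n : ℕ, r = ((m : ℝ), (n : ℝ)) := by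
  have habs (a b : ℕ) : ∃ k : ℕ, |(a : ℝ) - b| = k :=
    ⟨((a : ℤ) - b).natAbs, by rw [Nat.cast_natAbs, Int.cast_abs]; push_cast; rfl⟩
  simp only [fanRays, Finset.mem_insert, Finset.mem_image, Finset.mem_offDiag] at hr
  rcases hr with rfl | rfl | ⟨⟨x, y⟩, ⟨hx, hy, -⟩, rfl⟩
  · exact ⟨1, 0, by simp⟩
  · exact ⟨0, 1, by simp⟩
  · obtain ⟨a, b, rfl⟩ := hG x hx
    obtain ⟨c, d, rfl⟩ := hG y hy
    obtain ⟨m, hm⟩ := habs b d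
    obtain ⟨n, hn⟩ := habs a c
    exact ⟨m, n, by simp only [quadrantNormal, Prod.fst_sub, Prod.snd_sub, hm, hn]⟩

lemma exists_cone_fanRays (hG : G.Nonempty) {v : ℝ × ℝ} (hv : v ∈ quadrant2) :
    ∃ r₁ ∈ fanRays G, ∃ r₂ ∈ fanRays G, ∃ s t : ℝ, 0 ≤ s ∧ 0 ≤ t ∧ v = s • r₁ + t • r₂ ∧
      ∃ a ∈ G, IsMinOn (dot2 r₁) G a ∧ IsMinOn (dot2 r₂) G a := by
  classical
  have he₁ : ((1 : ℝ), (0 : ℝ)) ∈ fanRays G := Finset.mem_insert_self _ _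
  have he₂ : ((0 : ℝ), (1 : ℝ)) ∈ fanRays G :=
    Finset.mem_insert_of_mem (Finset.mem_insert_self _ _)
  rcases eq_or_ne v 0 with rfl | hv₀
  · obtain ⟨a, ha, hmin⟩ := exists_isMinOn_dot2 hG (1, 0)
    exact ⟨_, he₁, _, he₁, 0, 0, le_rfl, le_rfl, by simp, a, ha, hmin, hmin⟩
  have hvpos := add_pos_of_mem_quadrant2 hv hv₀
  -- `r₁` and `r₂` are the neighbours of `v` among the fan rays.
  obtain ⟨r₁, hr₁, hmax⟩ := ((fanRays G).filter (raySlope · ≤ raySlope v)).exists_max_image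
    raySlope ⟨_, Finset.mem_filter.2 ⟨he₁, (raySlope_le_iff (by norm_num) hvpos).2
      (by simpa using hv.2)⟩⟩
  obtain ⟨r₂, hr₂, hmin⟩ := ((fanRays G).filter (raySlope v ≤ raySlope ·)).exists_min_image
    raySlope ⟨_, Finset.mem_filter.2 ⟨he₂, (raySlope_le_iff hvpos (by norm_num)).2
      (by simpa using hv.1)⟩⟩
  rw [Finset.mem_filter] at hr₁ hr₂
  obtain ⟨s, t, hs, ht, hst⟩ := exists_eq_smul_add_smul_of_raySlope_le
    (add_pos_of_mem_fanRays hr₁.1) (add_pos_of_mem_fanRays hr₂.1) hvpos hr₁.2 hr₂.2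
  refine ⟨r₁, hr₁.1, r₂, hr₂.1, s, t, hs, ht, hst, exists_isMinOn_isMinOn hG
    (mem_quadrant2_of_mem_fanRays hr₁.1) (mem_quadrant2_of_mem_fanRays hr₂.1)
    (add_pos_of_mem_fanRays hr₁.1) (add_pos_of_mem_fanRays hr₂.1) (hr₁.2.trans hr₂.2) ?_⟩
  rintro x hx y hy hxy ⟨hlt₁, hlt₂⟩
  have hn := quadrantNormal_mem_fanRays hx hy hxy
  rcases le_or_gt (raySlope (quadrantNormal (x - y))) (raySlope v) with h | h
  · exact (hmax _ (Finset.mem_filter.2 ⟨hn, h⟩)).not_gt hlt₁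
  · exact (hmin _ (Finset.mem_filter.2 ⟨hn, h.le⟩)).not_gt hlt₂

/-- The support function is linear on each cone of `exists_cone_fanRays`. -/
lemma le_dot2_of_forall_fanRays (hG : G.Nonempty) {c : ℝ} {u : ℝ × ℝ}
    (h : ∀ r ∈ fanRays G, c * sInf (dot2 r '' newtonPolygon G) ≤ dot2 r u)
    {v : ℝ × ℝ} (hv : v ∈ quadrant2) : c * sInf (dot2 v '' newtonPolygon G) ≤ dot2 v u := by
  obtain ⟨r₁, hr₁, r₂, hr₂, s, t, hs, ht, rfl, a, ha, hmin₁, hmin₂⟩ := exists_cone_fanRays hG hv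
  have hmin : IsMinOn (dot2 (s • r₁ + t • r₂)) G a := isMinOn_iff.2 fun b hb => by
    simp only [dot2_add_left, dot2_smul_left]
    gcongr
    exacts [isMinOn_iff.1 hmin₁ b hb, isMinOn_iff.1 hmin₂ b hb]
  have hΦ {r : ℝ × ℝ} (hr : r ∈ fanRays G) (hmin : IsMinOn (dot2 r) G a) :=
    (isLeast_dot2_newtonPolygon (mem_quadrant2_of_mem_fanRays hr) ha hmin).csInf_eq
  have h₁ := h r₁ hr₁
  have h₂ := h r₂ hr₂
  rw [hΦ hr₁ hmin₁] at h₁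
  rw [hΦ hr₂ hmin₂] at h₂
  rw [(isLeast_dot2_newtonPolygon hv ha hmin).csInf_eq]
  simp only [dot2_add_left, dot2_smul_left]
  nlinarith [mul_le_mul_of_nonneg_left h₁ hs, mul_le_mul_of_nonneg_left h₂ ht]

end FanRays

lemma nonneg_of_forall_lt_add_mul {a b c : ℝ} (h : ∀ t : ℝ, 0 ≤ t → c < a + t * b) : 0 ≤ b := by
  by_contra! hb
  have hca := h 0 le_rfl
  have := h ((a - c) / -b) (div_nonneg (by linarith) (by linarith))
  rw [div_mul_eq_mul_div, div_neg, mul_div_cancel_right₀ _ hb.ne] at this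
  linarith

/-- The Hahn–Banach normal lies in `ℝ≥0²` because `T` recedes in the directions `(1, 0)` and
`(0, 1)`. -/
lemma exists_mem_quadrant2_dot2_lt {T : Set (ℝ × ℝ)} (hconv : Convex ℝ T) (hclosed : IsClosed T)
    (hT : ∀ z ∈ T, ∀ q ∈ quadrant2, z + q ∈ T) {u : ℝ × ℝ} (hu : u ∉ T) :
    ∃ v ∈ quadrant2, ∀ z ∈ T, dot2 v u < dot2 v z := by
  rcases T.eq_empty_or_nonempty with rfl | ⟨z₀, hz₀⟩
  · exact ⟨0, ⟨le_rfl, le_rfl⟩, by simp⟩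
  obtain ⟨l, c, hlu, hlT⟩ := geometric_hahn_banach_point_closed hconv hclosed hu
  have hl (z : ℝ × ℝ) : l z = dot2 (l (1, 0), l (0, 1)) z := by
    conv_lhs => rw [show z = z.1 • ((1 : ℝ), (0 : ℝ)) + z.2 • ((0 : ℝ), (1 : ℝ)) by simp]
    rw [map_add, map_smul, map_smul, dot2, smul_eq_mul, smul_eq_mul]
    ring
  refine ⟨(l (1, 0), l (0, 1)), ⟨?_, ?_⟩, fun z hz => ?_⟩
  · refine nonneg_of_forall_lt_add_mul (a := l z₀) (c := c) fun t ht => ?_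
    simpa [hl (t, 0), dot2, mul_comm] using hlT _ (hT z₀ hz₀ (t, 0) ⟨ht, le_rfl⟩)
  · refine nonneg_of_forall_lt_add_mul (a := l z₀) (c := c) fun t ht => ?_
    simpa [hl (0, t), dot2, mul_comm] using hlT _ (hT z₀ hz₀ (0, t) ⟨le_rfl, ht⟩)
  · rw [← hl, ← hl]
    exact hlu.trans (hlT z hz)

lemma mem_smul_newtonPolygon_of_forall {G : Finset (ℝ × ℝ)} (hG : G.Nonempty) {c : ℝ}
    (hc : 0 < c) {u : ℝ × ℝ}
    (h : ∀ v ∈ quadrant2, c * sInf (dot2 v '' newtonPolygon G) ≤ dot2 v u) :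
    u ∈ c • newtonPolygon G := by
  have hmem : c⁻¹ • u ∈ newtonPolygon G := by
    by_contra hu
    obtain ⟨v, hv, hsep⟩ := exists_mem_quadrant2_dot2_lt (convex_newtonPolygon G)
      (isClosed_newtonPolygon G) (fun z hz q hq => add_mem_newtonPolygon hz hq) hu
    obtain ⟨a, ha, hmin⟩ := exists_isMinOn_dot2 hG v
    have h₁ := hsep a (subset_newtonPolygon ha)
    have h₂ := h v hv
    rw [(isLeast_dot2_newtonPolygon hv ha hmin).csInf_eq] at h₂
    rw [dot2_smul_right, inv_mul_lt_iff₀ hc] at h₁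
    linarith
  simpa [smul_smul, hc.ne'] using smul_mem_smul_set (a := c) hmem

lemma lt_dot2_of_mem_interior {S : Set (ℝ × ℝ)} {v x : ℝ × ℝ} {b : ℝ} (hv : v ≠ 0)
    (hS : ∀ y ∈ S, b ≤ dot2 v y) (hx : x ∈ interior S) : b < dot2 v x := by
  have hlim : Tendsto (fun t : ℝ => x - t • v) (𝓝[>] 0) (𝓝 x) := by
    have hcont : Continuous fun t : ℝ => x - t • v := by fun_prop
    simpa using (hcont.tendsto 0).mono_left nhdsWithin_le_nhds
  obtain ⟨t, hxt, ht⟩ :=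
    ((hlim.eventually (mem_interior_iff_mem_nhds.1 hx)).and self_mem_nhdsWithin).exists
  have := hS _ hxt
  rw [dot2_sub_right, dot2_smul_right] at this
  nlinarith [mul_pos (show 0 < t from ht) (dot2_self_pos hv)]

theorem mem_interior_smul_newtonPolygon_iff {G : Finset (ℝ × ℝ)} (hG : G.Nonempty) {c : ℝ}
    (hc : 0 < c) {x : ℝ × ℝ} :
    x ∈ interior (c • newtonPolygon G) ↔
      ∀ r ∈ fanRays G, c * sInf (dot2 r '' newtonPolygon G) < dot2 r x := by
  constructor
  · intro hx r hr
    have hrq := mem_quadrant2_of_mem_fanRays hr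
    refine lt_dot2_of_mem_interior (ne_zero_of_mem_fanRays hr) ?_ hx
    rintro _ ⟨z, hz, rfl⟩
    rw [dot2_smul_right]
    exact mul_le_mul_of_nonneg_left (sInf_dot2_le hG hrq hz) hc.le
  · intro h
    rw [mem_interior_iff_mem_nhds]
    have hnear : ∀ᶠ y in 𝓝 x, ∀ r ∈ fanRays G,
        c * sInf (dot2 r '' newtonPolygon G) < dot2 r y :=
      (eventually_all_finset _).2 fun r hr =>
        ((continuous_dot2 r).tendsto x).eventually_const_lt (h r hr)
    exact hnear.mono fun y hy => mem_smul_newtonPolygon_of_forall hG hc fun v hv =>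
      le_dot2_of_forall_fanRays hG (fun r hr => (hy r hr).le) hv

theorem add_quadrant2_subset_interior_iff {G : Finset (ℝ × ℝ)} (hG : G.Nonempty) {c : ℝ}
    (hc : 0 < c) {A : Finset (ℝ × ℝ)} (hA : A.Nonempty) :
    (↑A : Set (ℝ × ℝ)) + quadrant2 ⊆ interior (c • newtonPolygon G) ↔
      ∀ r ∈ fanRays G, c * sInf (dot2 r '' newtonPolygon G) <
        (A.image (fun a => dot2 r a)).min' (hA.image _) := by
  simp_rw [Finset.lt_min'_iff, Finset.forall_mem_image]
  constructor
  · intro h r hr a ha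
    exact (mem_interior_smul_newtonPolygon_iff hG hc).1
      (h ⟨a, ha, 0, ⟨le_rfl, le_rfl⟩, add_zero a⟩) r hr
  · rintro h _ ⟨a, ha, q, hq, rfl⟩
    refine (mem_interior_smul_newtonPolygon_iff hG hc).2 fun r hr => ?_
    rw [dot2_add_right]
    linarith [h r hr ha, dot2_nonneg (mem_quadrant2_of_mem_fanRays hr) hq]

/-- Dickson's lemma; `F` consists of the minimal elements of `S`. -/
theorem exists_finset_subset_forall_exists_le {α : Type*} [PartialOrder α]
    [WellQuasiOrderedLE α] (S : Set α) : ∃ F : Finset α, ↑F ⊆ S ∧ ∀ s ∈ S, ∃ e ∈ F, e ≤ s := by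
  have hfin : {x | Minimal (· ∈ S) x}.Finite :=
    WellQuasiOrderedLE.finite_of_isAntichain (setOfPred_minimal_antichain _)
  refine ⟨hfin.toFinset, fun x hx => (hfin.mem_toFinset.1 hx).prop, fun s hs => ?_⟩
  obtain ⟨e, hes, he⟩ := exists_minimal_le_of_wellFoundedLT (· ∈ S) s hs
  exact ⟨e, hfin.mem_toFinset.2 he, hes⟩

lemma convexHull_add_quadrant2_eq {G S : Set (ℝ × ℝ)} (hGS : G ⊆ S) (hSG : S ⊆ G + quadrant2) :
    convexHull ℝ S + quadrant2 = convexHull ℝ G + quadrant2 := by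
  refine (add_subset_add_right (convexHull_mono hGS)).antisymm' ?_
  have hS : convexHull ℝ S ⊆ convexHull ℝ G + quadrant2 :=
    convexHull_min (hSG.trans (add_subset_add_right (subset_convexHull ℝ G)))
      ((convex_convexHull ℝ G).add (quadrant2_eq_Ici ▸ convex_Ici 0))
  calc convexHull ℝ S + quadrant2 ⊆ convexHull ℝ G + quadrant2 + quadrant2 :=
        add_subset_add_right hS
    _ ⊆ convexHull ℝ G + quadrant2 := by
        rw [add_assoc]; exact add_subset_add_left quadrant2_add_quadrant2

lemma exists_newtonPoly_eq_newtonPolygon {f : MvPowerSeries (Fin 2) ℂ} (hf : f ≠ 0) :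
    ∃ G : Finset (ℝ × ℝ), G.Nonempty ∧ (∀ p ∈ G, ∃ m n : ℕ, p = ((m : ℝ), (n : ℝ))) ∧
      newtonPoly f = newtonPolygon G := by
  classical
  set toR : ℕ × ℕ → ℝ × ℝ := fun p => ((p.1 : ℝ), (p.2 : ℝ))
  set S : Set (ℕ × ℕ) :=
    (fun d : Fin 2 →₀ ℕ => (d 0, d 1)) '' {d | MvPowerSeries.coeff d f ≠ 0}
  have hsupp : psupp f = toR '' S := by
    ext p
    simp [psupp, S, toR, eq_comm]
  obtain ⟨F, hFS, hcover⟩ := exists_finset_subset_forall_exists_le S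
  obtain ⟨d, hd⟩ : ∃ d, MvPowerSeries.coeff d f ≠ 0 := by
    by_contra! h
    exact hf (MvPowerSeries.ext fun d => by simpa using h d)
  obtain ⟨e, he, -⟩ := hcover _ ⟨d, hd, rfl⟩
  refine ⟨F.image toR, ⟨toR e, Finset.mem_image_of_mem _ he⟩,
    Finset.forall_mem_image.2 fun p _ => ⟨p.1, p.2, rfl⟩, ?_⟩
  rw [newtonPoly, newtonPolygon, hsupp, Finset.coe_image]
  refine convexHull_add_quadrant2_eq (image_mono hFS) ?_
  rintro _ ⟨s, hs, rfl⟩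
  obtain ⟨e, he, hes⟩ := hcover s hs
  refine ⟨toR e, mem_image_of_mem _ he, toR s - toR e, ⟨?_, ?_⟩, add_sub_cancel _ _⟩
  · exact sub_nonneg.2 (Nat.cast_le.2 hes.1)
  · exact sub_nonneg.2 (Nat.cast_le.2 hes.2)

/-- There is a finite set V of nonzero integral vectors of ℝ≥0², depending only
on f, such that for every nonempty finite A ⊆ ℝ≥0² and every rational ξ > 0, the inclusion
A + ℝ≥0² ⊆ Int(ξ·𝒩(f)) holds iff min_{a∈A}⟨v,a⟩ > ξ·Φ_{𝒩(f)}(v) for every v ∈ V. -/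
theorem inclusion_iff_finitely_many_normals (f : MvPowerSeries (Fin 2) ℂ) (hf : f ≠ 0) :
    ∃ V : Finset (ℝ × ℝ),
      (∀ v ∈ V, v ≠ 0 ∧ v ∈ quadrant2 ∧ ∃ m n : ℕ, v = ((m : ℝ), (n : ℝ))) ∧
      ∀ (A : Finset (ℝ × ℝ)) (hA : A.Nonempty),
        (↑A : Set (ℝ × ℝ)) ⊆ quadrant2 → ∀ ξ : ℚ, 0 < ξ →
          (((↑A : Set (ℝ × ℝ)) + quadrant2 ⊆ interior ((ξ : ℝ) • newtonPoly f)) ↔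
            ∀ v ∈ V,
              (ξ : ℝ) * suppFn f v < (A.image (fun a => dot2 v a)).min' (hA.image _)) := by
  obtain ⟨G, hG, hGnat, hfG⟩ := exists_newtonPoly_eq_newtonPolygon hf
  refine ⟨fanRays G, fun v hv => ⟨ne_zero_of_mem_fanRays hv, mem_quadrant2_of_mem_fanRays hv,
    exists_natCast_of_mem_fanRays hGnat hv⟩, fun A hA _ ξ hξ => ?_⟩
  simp only [suppFn, hfG]
  exact add_quadrant2_subset_interior_iff hG (Rat.cast_pos.2 hξ) hA
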